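/- The gradient of the dual TV-denoising objective h(p,q) = −‖H_𝒞(d − βℒ(p,q))‖_F² + ‖d − βℒ(p,q)‖_F² is ∇h(p,q) = −2β ℒ* P_𝒞(d − βℒ(p,q)), and it is Lipschitz continuous with Lipschitz constant at most 16β². -/

import Mathlib

/-
With `u = d - βℒ(p,q)` the objective is `g u = ‖u‖² - ‖u - P_𝒞 u‖² = 2⟪u, P_𝒞 u⟫ - ‖P_𝒞 u‖²`.
Only the obtuse-angle inequality `⟪x - P x, P y - P x⟫ ≤ 0` of the projection is needed: applied
at `u` and at `u + v` it pins `g (u + v) - g u - 2⟪P u, v⟫` between `0` and `‖v‖²`, so `∇g = 2P`,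
and adding the two instances shows that `P` is firmly nonexpansive, hence `1`-Lipschitz.
The chain rule through the affine map `pq ↦ d - βℒ pq` gives the gradient, and composing
Lipschitz constants gives `2β‖ℒ‖ · 1 · β‖ℒ‖ ≤ 16β²`.
-/

open scoped ENNReal NNReal

noncomputable section

variable {m n : ℕ}

/-- the primal space ℝ^{m×n} with the Frobenius inner product -/
abbrev MatSp (m n : ℕ) : Type := EuclideanSpace ℝ (Fin m × Fin n)

/-- the dual space ℝ^{(m−1)×n} × ℝ^{m×(n−1)} with its Euclidean structure -/
abbrev DualSp (m n : ℕ) : Type :=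
  EuclideanSpace ℝ ((Fin (m - 1) × Fin n) ⊕ (Fin m × Fin (n - 1)))

/-- componentwise orthogonal projection onto the box 𝒞 = [λ, λ⁻¹]^{m×n} -/
def projC (lam : ℝ) (x : MatSp m n) : MatSp m n :=
  (WithLp.equiv 2 (Fin m × Fin n → ℝ)).symm fun ij => max lam (min (x ij) lam⁻¹)

/-- H_𝒞 = I − P_𝒞 -/
def HC (lam : ℝ) (x : MatSp m n) : MatSp m n := x - projC lam x

/-- the dual objective h(p,q) = −‖H_𝒞(d − βℒ(p,q))‖² + ‖d − βℒ(p,q)‖² -/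
def dualObj (lam β : ℝ) (d : MatSp m n) (ℒ : DualSp m n →L[ℝ] MatSp m n)
    (pq : DualSp m n) : ℝ :=
  -‖HC lam (d - β • ℒ pq)‖ ^ 2 + ‖d - β • ℒ pq‖ ^ 2

open RealInnerProductSpace

lemma clamp_variational (lo hi a b : ℝ) :
    (a - max lo (min a hi)) * (max lo (min b hi) - max lo (min a hi)) ≤ 0 := by
  simp only [max_def, min_def]
  split_ifs <;> nlinarith

lemma projC_variational (lam : ℝ) (x y : MatSp m n) :
    ⟪x - projC lam x, projC lam y - projC lam x⟫ ≤ 0 := by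
  rw [PiLp.inner_apply]
  refine Finset.sum_nonpos fun ij _ => ?_
  simpa [projC, mul_comm] using clamp_variational lam lam⁻¹ (x ij) (y ij)

section Variational

/- `hP` is the obtuse-angle inequality characterising the metric projection onto a convex set
(here the range of `P`). -/

variable {E : Type*} [NormedAddCommGroup E] [InnerProductSpace ℝ E] {P : E → E}

lemma norm_sub_sq_le_inner_of_variational (hP : ∀ x y, ⟪x - P x, P y - P x⟫ ≤ 0) (x y : E) :
    ‖P y - P x‖ ^ 2 ≤ ⟪P y - P x, y - x⟫ := by
  have hx := hP x y
  have hy := hP y x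
  have hsum : ⟪P y - P x, y - x⟫ - ‖P y - P x‖ ^ 2
      = -⟪x - P x, P y - P x⟫ - ⟪y - P y, P x - P y⟫ := by
    rw [← real_inner_self_eq_norm_sq]
    simp only [inner_sub_left, inner_sub_right, real_inner_comm]
    ring
  linarith

lemma lipschitzWith_one_of_variational (hP : ∀ x y, ⟪x - P x, P y - P x⟫ ≤ 0) :
    LipschitzWith 1 P := by
  refine LipschitzWith.of_dist_le_mul fun y x => ?_
  rw [NNReal.coe_one, one_mul, dist_eq_norm, dist_eq_norm]
  have h := (norm_sub_sq_le_inner_of_variational hP x y).trans (real_inner_le_norm _ _)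
  nlinarith [norm_nonneg (P y - P x), norm_nonneg (y - x)]

lemma abs_sub_sub_inner_le_of_variational (hP : ∀ x y, ⟪x - P x, P y - P x⟫ ≤ 0) (x v : E) :
    |(-‖x + v - P (x + v)‖ ^ 2 + ‖x + v‖ ^ 2) - (-‖x - P x‖ ^ 2 + ‖x‖ ^ 2)
      - ⟪(2 : ℝ) • P x, v⟫| ≤ ‖v‖ ^ 2 := by
  set a := P x
  set b := P (x + v)
  have key : (-‖x + v - b‖ ^ 2 + ‖x + v‖ ^ 2) - (-‖x - a‖ ^ 2 + ‖x‖ ^ 2) - ⟪(2 : ℝ) • a, v⟫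
      = 2 * ⟪x - a, b - a⟫ + 2 * ⟪v, b - a⟫ - ‖b - a‖ ^ 2 := by
    simp only [← real_inner_self_eq_norm_sq, inner_sub_left, inner_sub_right, inner_add_left,
      inner_add_right, real_inner_smul_right, real_inner_comm]
    ring
  have hxv_eq : ⟪x + v - b, a - b⟫ = ‖b - a‖ ^ 2 - ⟪x - a, b - a⟫ - ⟪v, b - a⟫ := by
    simp only [← real_inner_self_eq_norm_sq, inner_sub_left, inner_sub_right, inner_add_left,
      real_inner_comm]
    ring
  have hx : ⟪x - a, b - a⟫ ≤ 0 := hP x (x + v)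
  have hxv : ⟪x + v - b, a - b⟫ ≤ 0 := hP (x + v) x
  have hvb : ⟪v, b - a⟫ ≤ ‖v‖ * ‖b - a‖ := real_inner_le_norm _ _
  rw [key, abs_le]
  constructor
  · nlinarith [sq_nonneg ‖v‖, sq_nonneg ‖b - a‖]
  · nlinarith [sq_nonneg (‖v‖ - ‖b - a‖)]

lemma hasGradientAt_of_variational [CompleteSpace E] (hP : ∀ x y, ⟪x - P x, P y - P x⟫ ≤ 0)
    (x : E) :
    HasGradientAt (fun x => -‖x - P x‖ ^ 2 + ‖x‖ ^ 2) ((2 : ℝ) • P x) x := by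
  rw [hasGradientAt_iff_isLittleO_nhds_zero]
  refine Asymptotics.IsBigO.trans_isLittleO ?_ (Asymptotics.isLittleO_norm_pow_id one_lt_two)
  refine Asymptotics.IsBigO.of_bound 1 (Filter.Eventually.of_forall fun v => ?_)
  simpa [Real.norm_eq_abs] using abs_sub_sub_inner_le_of_variational hP x v

end Variational

lemma HasGradientAt.comp_const_sub_continuousLinearMap {E F : Type*} [NormedAddCommGroup E]
    [InnerProductSpace ℝ E] [CompleteSpace E] [NormedAddCommGroup F] [InnerProductSpace ℝ F]
    [CompleteSpace F] {f : E → ℝ} {g : E} {c : E} {A : F →L[ℝ] E} {x : F}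
    (hf : HasGradientAt f g (c - A x)) :
    HasGradientAt (fun y => f (c - A y)) (-(ContinuousLinearMap.adjoint A g)) x := by
  rw [hasGradientAt_iff_hasFDerivAt] at hf ⊢
  refine (hf.comp x (A.hasFDerivAt.const_sub c)).congr_fderiv ?_
  ext y
  simp [ContinuousLinearMap.adjoint_inner_left]

theorem dual_tv_objective_gradient_and_lipschitz_general
    (m n : ℕ) (lam β : ℝ)
    (d : MatSp m n) (ℒ : DualSp m n →L[ℝ] MatSp m n) (hℒ : ‖ℒ‖ ^ 2 ≤ 8) :
    (∀ pq : DualSp m n,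
      HasGradientAt (dualObj lam β d ℒ)
        ((-(2 * β)) • (ContinuousLinearMap.adjoint ℒ) (projC lam (d - β • ℒ pq))) pq) ∧
    LipschitzWith (Real.toNNReal (16 * β ^ 2))
      (fun pq : DualSp m n =>
        (-(2 * β)) • (ContinuousLinearMap.adjoint ℒ) (projC lam (d - β • ℒ pq))) := by
  have hP := projC_variational (m := m) (n := n) lam
  constructor
  · intro pq
    have h := (hasGradientAt_of_variational hP (d - (β • ℒ) pq)).comp_const_sub_continuousLinearMap
    convert h using 1
    · rfl
    rw [map_smulₛₗ]
    simp only [neg_smul, Real.ringHom_apply, map_smul, smul_apply, smul_smul]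
  · have h := (((-(2 * β)) • ContinuousLinearMap.adjoint ℒ).lipschitz.comp
      ((lipschitzWith_one_of_variational hP).comp
        ((IsometryEquiv.subLeft d).isometry.lipschitz.comp (β • ℒ).lipschitz)))
    refine h.weaken ?_
    rw [← NNReal.coe_le_coe]
    simp only [NNReal.coe_mul, coe_nnnorm, one_mul, norm_smul,
      LinearIsometryEquiv.norm_map, Real.norm_eq_abs, Real.coe_toNNReal']
    refine le_max_of_le_left ?_
    have hconst : |-(2 * β)| * ‖ℒ‖ * (|β| * ‖ℒ‖) = 2 * β ^ 2 * ‖ℒ‖ ^ 2 := by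
      rw [abs_neg, abs_mul, abs_two, ← sq_abs β]
      ring
    nlinarith [mul_le_mul_of_nonneg_left hℒ (sq_nonneg β)]

/-- the gradient of the dual TV-denoising objective is
`∇h(p,q) = −2β ℒ* P_𝒞(d − βℒ(p,q))`, and it is Lipschitz continuous with
constant at most 16β². -/
theorem dual_tv_objective_gradient_and_lipschitz
    (m n : ℕ) (lam β : ℝ) (hlam₀ : 0 < lam) (hlam₁ : lam < 1) (hβ : 0 < β)
    (d : MatSp m n) (ℒ : DualSp m n →L[ℝ] MatSp m n) (hℒ : ‖ℒ‖ ^ 2 ≤ 8) :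
    (∀ pq : DualSp m n,
      HasGradientAt (dualObj lam β d ℒ)
        ((-(2 * β)) • (ContinuousLinearMap.adjoint ℒ) (projC lam (d - β • ℒ pq))) pq) ∧
    LipschitzWith (Real.toNNReal (16 * β ^ 2))
      (fun pq : DualSp m n =>
        (-(2 * β)) • (ContinuousLinearMap.adjoint ℒ) (projC lam (d - β • ℒ pq))) :=
  dual_tv_objective_gradient_and_lipschitz_general m n lam β d ℒ hℒ

end
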